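/- arXiv:1704.05947 — 2 statements merged into one kernel-verified Lean document; each statement's English description precedes it below -/
import Mathlib

section
/- Let G be a discrete-time switched affine model with m modes and let {(u_t, y_t)}_{t=0}^{N-1} be an input–output sequence with ‖u_t‖_∞ ≤ U for all t. Suppose there exist states x_0,…,x_N ∈ ℝ^n, noises η_t ∈ ℝ^{n_y}, ν_t ∈ ℝ^n, binary variables a_{i,t} ∈ {0,1} with Σ_{i=1}^m a_{i,t} = 1 for every t, and slack vectors s_{i,t} ∈ ℝ^n, r_{i,t} ∈ ℝ^{n_y} such that for every mode i ∈ {1,…,m} and every t ∈ {0,…,N−1}: x_{t+1} = A_i x_t + B_i u_t + f_i + ν_t + s_{i,t}; y_t = C_i x_t + D_i u_t + g_i + η_t + r_{i,t}; P x_t ≤ p (componentwise); ‖ν_t‖_∞ ≤ ε_ν; ‖η_t‖_∞ ≤ ε_η; and the SOS-1 conditions hold: for every component j of s_{i,t} at most one of a_{i,t} and s_{i,t}^j is nonzero, and for every component k of r_{i,t} at most one of a_{i,t} and r_{i,t}^k is nonzero. Then {(u_t, y_t)}_{t=0}^{N-1} belongs to the length-N behavior B^N(G). -/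
open Matrix

/-- A discrete-time switched affine (SWA) model with `m` modes, state dimension `n`,
input dimension `nu`, output dimension `ny`, `q` state constraints `P x ≤ p`,
input bound `U`, measurement-noise bound `εη` and process-noise bound `εν`. -/
structure SWA (n nu ny q m : ℕ) where
  A : Fin m → Matrix (Fin n) (Fin n) ℝ
  B : Fin m → Matrix (Fin n) (Fin nu) ℝ
  C : Fin m → Matrix (Fin ny) (Fin n) ℝ
  D : Fin m → Matrix (Fin ny) (Fin nu) ℝ
  f : Fin m → Fin n → ℝ
  g : Fin m → Fin ny → ℝ
  P : Matrix (Fin q) (Fin n) ℝ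
  p : Fin q → ℝ
  U : ℝ
  εη : ℝ
  εν : ℝ

/-- The length-`N` behavior of an SWA model: the input-output sequence
`{(u_t, y_t)}_{t=0}^{N-1}` (given as `ℕ`-indexed functions, only the first `N`
values matter) is compatible with the model.  The norm `‖·‖` on `Fin k → ℝ`
is the sup-norm. -/
def InBehavior {n nu ny q m : ℕ} (G : SWA n nu ny q m) (N : ℕ)
    (u : ℕ → Fin nu → ℝ) (y : ℕ → Fin ny → ℝ) : Prop :=
  (∀ t < N, ‖u t‖ ≤ G.U) ∧
  ∃ (x : ℕ → Fin n → ℝ) (σ : ℕ → Fin m)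
    (η : ℕ → Fin ny → ℝ) (ν : ℕ → Fin n → ℝ),
    ∀ t < N,
      (∀ k, (G.P.mulVec (x t)) k ≤ G.p k) ∧
      ‖η t‖ ≤ G.εη ∧ ‖ν t‖ ≤ G.εν ∧
      x (t + 1) = (G.A (σ t)).mulVec (x t) + (G.B (σ t)).mulVec (u t)
        + G.f (σ t) + ν t ∧
      y t = (G.C (σ t)).mulVec (x t) + (G.D (σ t)).mulVec (u t)
        + G.g (σ t) + η t

/-- Two SWA models (with the same input and output dimensions) are
`T`-distinguishable if their length-`T` behaviors do not intersect. -/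
def TDistinguishable {n nu ny q m n' q' m' : ℕ}
    (G : SWA n nu ny q m) (Gb : SWA n' nu ny q' m') (T : ℕ) : Prop :=
  ¬ ∃ (u : ℕ → Fin nu → ℝ) (y : ℕ → Fin ny → ℝ),
      InBehavior G T u y ∧ InBehavior Gb T u y

/-!
The SOS-1 constraints switch off every slack of a mode `i` with `a i t ≠ 0`. Since the
`a · t` sum to `1`, some mode is active at each time `t`; taking it as `σ t` turns the
relaxed dynamics and output equations into the exact equations of the SWA model.
-/

theorem eq_zero_of_forall_eq_zero_or_eq_zero {ι R M : Type*} [Zero R] [Zero M] {c : R}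
    {v : ι → M} (hc : c ≠ 0) (h : ∀ j, c = 0 ∨ v j = 0) : v = 0 :=
  funext fun j => (h j).resolve_left hc

theorem feasibility_implies_behavior_general
    {n nu ny q m N : ℕ} (hm : 0 < m) (G : SWA n nu ny q m)
    (u : ℕ → Fin nu → ℝ) (y : ℕ → Fin ny → ℝ)
    (hu : ∀ t < N, ‖u t‖ ≤ G.U)
    (x : ℕ → Fin n → ℝ) (η : ℕ → Fin ny → ℝ) (ν : ℕ → Fin n → ℝ)
    (a : Fin m → ℕ → ℝ) (s : Fin m → ℕ → Fin n → ℝ) (r : Fin m → ℕ → Fin ny → ℝ)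
    (hsum : ∀ t < N, ∑ i : Fin m, a i t = 1)
    (hdyn : ∀ i, ∀ t < N,
      x (t + 1) = (G.A i).mulVec (x t) + (G.B i).mulVec (u t) + G.f i + ν t + s i t)
    (hout : ∀ i, ∀ t < N,
      y t = (G.C i).mulVec (x t) + (G.D i).mulVec (u t) + G.g i + η t + r i t)
    (hP : ∀ t < N, ∀ k, (G.P.mulVec (x t)) k ≤ G.p k)
    (hν : ∀ t < N, ‖ν t‖ ≤ G.εν)
    (hη : ∀ t < N, ‖η t‖ ≤ G.εη)
    (hsos_s : ∀ i, ∀ t < N, ∀ j, a i t = 0 ∨ s i t j = 0)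
    (hsos_r : ∀ i, ∀ t < N, ∀ k, a i t = 0 ∨ r i t k = 0) :
    InBehavior G N u y := by
  have : Nonempty (Fin m) := Fin.pos_iff_nonempty.mp hm
  have active : ∀ t < N, ∃ i, a i t ≠ 0 := fun t ht =>
    let ⟨i, _, hi⟩ := Finset.exists_ne_zero_of_sum_ne_zero (hsum t ht ▸ one_ne_zero)
    ⟨i, hi⟩
  choose! σ hσ using active
  refine ⟨hu, x, σ, η, ν, fun t ht => ⟨hP t ht, hη t ht, hν t ht, ?_, ?_⟩⟩
  · simpa only [eq_zero_of_forall_eq_zero_or_eq_zero (hσ t ht) (hsos_s _ t ht), add_zero]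
      using hdyn (σ t) t ht
  · simpa only [eq_zero_of_forall_eq_zero_or_eq_zero (hσ t ht) (hsos_r _ t ht), add_zero]
      using hout (σ t) t ht

/-- feasibility of the SOS-1 MILP (P_MI) implies that the
input-output sequence belongs to the length-`N` behavior of `G`. -/
theorem feasibility_implies_behavior
    {n nu ny q m N : ℕ} (hm : 0 < m) (G : SWA n nu ny q m)
    (u : ℕ → Fin nu → ℝ) (y : ℕ → Fin ny → ℝ)
    (hu : ∀ t < N, ‖u t‖ ≤ G.U)
    (x : ℕ → Fin n → ℝ) (η : ℕ → Fin ny → ℝ) (ν : ℕ → Fin n → ℝ)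
    (a : Fin m → ℕ → ℝ) (s : Fin m → ℕ → Fin n → ℝ) (r : Fin m → ℕ → Fin ny → ℝ)
    (ha01 : ∀ i, ∀ t < N, a i t = 0 ∨ a i t = 1)
    (hsum : ∀ t < N, ∑ i : Fin m, a i t = 1)
    (hdyn : ∀ i, ∀ t < N,
      x (t + 1) = (G.A i).mulVec (x t) + (G.B i).mulVec (u t) + G.f i + ν t + s i t)
    (hout : ∀ i, ∀ t < N,
      y t = (G.C i).mulVec (x t) + (G.D i).mulVec (u t) + G.g i + η t + r i t)
    (hP : ∀ t < N, ∀ k, (G.P.mulVec (x t)) k ≤ G.p k)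
    (hν : ∀ t < N, ‖ν t‖ ≤ G.εν)
    (hη : ∀ t < N, ‖η t‖ ≤ G.εη)
    (hsos_s : ∀ i, ∀ t < N, ∀ j, a i t = 0 ∨ s i t j = 0)
    (hsos_r : ∀ i, ∀ t < N, ∀ k, a i t = 0 ∨ r i t k = 0) :
    InBehavior G N u y :=
  feasibility_implies_behavior_general hm G u y hu x η ν a s r hsum hdyn hout hP hν hη hsos_s hsos_r
end

section
/- Let G be a discrete-time switched affine (nominal) model and Ḡ_i a switched affine fault model with the same input and output dimensions, and suppose the pair (G, Ḡ_i) is T_i-distinguishable for a positive integer T_i. Let T ≥ T_i be a positive integer and let {(u_t, y_t)}_{t=0}^{T-1} be a length-T input–output sequence that contains a contiguous sub-window of length T_i belonging to B^{T_i}(Ḡ_i), i.e., there exists t₀ with 0 ≤ t₀ and t₀ + T_i ≤ T such that {(u_{t₀+s}, y_{t₀+s})}_{s=0}^{T_i−1} ∈ B^{T_i}(Ḡ_i). Then {(u_t, y_t)}_{t=0}^{T-1} ∉ B^T(G); that is, a persistent fault matching Ḡ_i is detected by the length-T receding-horizon model-invalidation test within at most T_i samples of its occurrence. -/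
open Matrix

lemma InBehavior.shift {n nu ny q m : ℕ} {G : SWA n nu ny q m} {N : ℕ}
    {u : ℕ → Fin nu → ℝ} {y : ℕ → Fin ny → ℝ} (h : InBehavior G N u y)
    (t₀ M : ℕ) (hM : t₀ + M ≤ N) :
    InBehavior G M (fun s => u (t₀ + s)) (fun s => y (t₀ + s)) := by
  obtain ⟨hu, x, σ, η, ν, hx⟩ := h
  refine ⟨fun t _ => hu (t₀ + t) (by omega), fun s => x (t₀ + s), fun s => σ (t₀ + s),
    fun s => η (t₀ + s), fun s => ν (t₀ + s), fun t ht => ?_⟩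
  simpa only [Nat.add_assoc] using hx (t₀ + t) (by omega)

theorem fault_detection_guarantee_general
    {n nu ny q m n' q' m' : ℕ}
    (G : SWA n nu ny q m) (Gb : SWA n' nu ny q' m')
    (Ti T t₀ : ℕ) (ht₀ : t₀ + Ti ≤ T)
    (hdist : TDistinguishable G Gb Ti)
    (u : ℕ → Fin nu → ℝ) (y : ℕ → Fin ny → ℝ)
    (hwin : InBehavior Gb Ti (fun s => u (t₀ + s)) (fun s => y (t₀ + s))) :
    ¬ InBehavior G T u y := by
  intro h
  exact hdist ⟨_, _, h.shift t₀ Ti ht₀, hwin⟩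

/-- if `(G, Ḡᵢ)` is `Tᵢ`-distinguishable and a length-`T` data window
(`T ≥ Tᵢ`) contains a contiguous length-`Tᵢ` sub-window generated by the fault
model `Ḡᵢ`, then the length-`T` window is not in the behavior of `G`, i.e., the
receding-horizon model-invalidation test detects the fault. -/
theorem fault_detection_guarantee
    {n nu ny q m n' q' m' : ℕ}
    (G : SWA n nu ny q m) (Gb : SWA n' nu ny q' m')
    (Ti T t₀ : ℕ) (hTi : 0 < Ti) (hT : Ti ≤ T) (ht₀ : t₀ + Ti ≤ T)
    (hdist : TDistinguishable G Gb Ti)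
    (u : ℕ → Fin nu → ℝ) (y : ℕ → Fin ny → ℝ)
    (hwin : InBehavior Gb Ti (fun s => u (t₀ + s)) (fun s => y (t₀ + s))) :
    ¬ InBehavior G T u y :=
  fault_detection_guarantee_general G Gb Ti T t₀ ht₀ hdist u y hwin
end
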